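/- (Lemma 2, LQR based approach.) Let F : ℝ^{n_x} × ℝ^{n_u} → ℝ^{n_x} be twice continuously differentiable with F(0,0) = 0, let U ⊆ ℝ^{n_u} contain the origin in its interior, and let W_x, W̃_x be symmetric n_x×n_x matrices and W_u, W̃_u symmetric n_u×n_u matrices with W_x, W_u positive definite, W̃_x − W_x positive definite, and W̃_u − W_u positive definite. Set Φ := ∂F/∂x(0,0) and Γ := ∂F/∂u(0,0). Suppose P is a symmetric positive definite matrix and L a real n_u×n_x matrix such that, with Φ_L := Φ − Γ L, (a) Φ_Lᵀ P Φ_L − P = −(W̃_x + Lᵀ W̃_u L), and (b) the matrix W̃_u + Γᵀ P Γ is invertible and L = (W̃_u + Γᵀ P Γ)⁻¹ Γᵀ P Φ. Then there exists α > 0 such that, with Ω := {x ∈ ℝ^{n_x} : xᵀ P x ≤ α}: (i) −L x ∈ U for every x ∈ Ω; (ii) F(x, −L x) ∈ Ω for every x ∈ Ω, so Ω is an invariant set for the closed-loop system x(k+1) = F(x(k), −L x(k)); and (iii) for every trajectory of this closed-loop system with x(0) ∈ Ω, the series Σ_{k=0}^{∞} ( x(k)ᵀ W_x x(k) + (L x(k))ᵀ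 W_u (L x(k)) ) converges with sum at most x(0)ᵀ P x(0). -/

import Mathlib

/-!
`V x = xᵀ P x` is a Lyapunov function for the closed loop `x ↦ F (x, -L x)` near the origin.
The Riccati-type identity says that along the linearisation `Φ_L = Φ - Γ L` one has exactly
`V (Φ_L x) = V x - xᵀ (W̃x + Lᵀ W̃u L) x`. The closed loop differs from `Φ_L` by `o(‖x‖)`, so
`V` along it differs from `V ∘ Φ_L` by `o(‖x‖²)`, and near `0` this error is absorbed by the
positive definite margin `(W̃x - Wx) + Lᵀ (W̃u - Wu) L`: there `V` decreases by at least the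
stage cost. A small sublevel set of `V` lies in that neighbourhood and in the preimage of `U`;
it is therefore invariant, and telescoping the decrease along a trajectory bounds the partial
sums of the stage cost by `V (x 0)`.
-/

open Matrix Asymptotics Filter Topology

namespace ContinuousLinearMap

variable {α E F G : Type*} [NormedAddCommGroup E] [NormedSpace ℝ E] [NormedAddCommGroup F]
  [NormedSpace ℝ F] [NormedAddCommGroup G] [NormedSpace ℝ G] {l : Filter α}

theorem isBigO_comp₂ (B : E →L[ℝ] F →L[ℝ] G) (u : α → E) (v : α → F) :
    (fun x => B (u x) (v x)) =O[l] fun x => ‖u x‖ * ‖v x‖ :=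
  .of_bound ‖B‖ <| .of_forall fun x => by
    simpa [mul_assoc] using B.le_opNorm₂ (u x) (v x)

theorem isLittleO_comp₂_self_sub (B : E →L[ℝ] E →L[ℝ] G) {u v : α → E} {k : α → ℝ}
    (huv : (fun x => u x - v x) =o[l] k) (hu : u =O[l] k) (hv : v =O[l] k) :
    (fun x => B (u x) (u x) - B (v x) (v x)) =o[l] fun x => k x ^ 2 := by
  have hsplit : ∀ x, B (u x) (u x) - B (v x) (v x) = B (u x - v x) (u x) + B (v x) (u x - v x) :=
    fun x => by simp only [map_sub, _root_.sub_apply]; abel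
  simp only [hsplit, sq]
  exact ((B.isBigO_comp₂ _ _).trans_isLittleO (huv.norm_left.mul_isBigO hu.norm_left)).add
    ((B.isBigO_comp₂ _ _).trans_isLittleO (hv.norm_left.mul_isLittleO huv.norm_left))

end ContinuousLinearMap

namespace Matrix

variable {m n : Type*} [Fintype m] [Fintype n]

theorem PosDef.exists_pos_mul_sq_norm_le {M : Matrix n n ℝ} (hM : M.PosDef) :
    ∃ c > 0, ∀ x : n → ℝ, c * ‖x‖ ^ 2 ≤ x ⬝ᵥ (M *ᵥ x) := by
  have hcont : Continuous fun x : n → ℝ => x ⬝ᵥ (M *ᵥ x) := by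
    simp only [dotProduct, mulVec]; fun_prop
  obtain ⟨c, hc, hmin⟩ := (isCompact_sphere (0 : n → ℝ) 1).exists_forall_le' hcont.continuousOn
    fun y hy => by simpa using hM.dotProduct_mulVec_pos (ne_zero_of_mem_unit_sphere ⟨y, hy⟩)
  refine ⟨c, hc, fun x => ?_⟩
  rcases eq_or_ne x 0 with rfl | hx
  · simp
  · have hscale : x ⬝ᵥ (M *ᵥ x) = ‖x‖ ^ 2 * ((‖x‖⁻¹ • x) ⬝ᵥ (M *ᵥ (‖x‖⁻¹ • x))) := by
      simp only [mulVec_smul, smul_dotProduct, dotProduct_smul, smul_eq_mul]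
      field_simp
    rw [hscale, mul_comm c]
    exact mul_le_mul_of_nonneg_left (hmin _ (by simpa using norm_smul_inv_norm (𝕜 := ℝ) hx))
      (sq_nonneg _)

theorem PosDef.exists_setOf_dotProduct_mulVec_le_subset {P : Matrix n n ℝ} (hP : P.PosDef)
    {N : Set (n → ℝ)} (hN : N ∈ 𝓝 0) : ∃ α > 0, {x | x ⬝ᵥ (P *ᵥ x) ≤ α} ⊆ N := by
  obtain ⟨c, hc, hlow⟩ := hP.exists_pos_mul_sq_norm_le
  obtain ⟨δ, hδ, hball⟩ := Metric.mem_nhds_iff.mp hN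
  refine ⟨c * (δ / 2) ^ 2, by positivity, fun x hx => hball ?_⟩
  have hsq : ‖x‖ ^ 2 ≤ (δ / 2) ^ 2 := le_of_mul_le_mul_left ((hlow x).trans hx) hc
  rw [mem_ball_zero_iff]
  nlinarith [norm_nonneg x]

theorem dotProduct_mulVec_transpose_mul_mul (A : Matrix m n ℝ)
    (M : Matrix m m ℝ) (x : n → ℝ) :
    x ⬝ᵥ ((Aᵀ * M * A) *ᵥ x) = (A *ᵥ x) ⬝ᵥ (M *ᵥ (A *ᵥ x)) := by
  rw [← mulVec_mulVec, ← mulVec_mulVec, dotProduct_mulVec x Aᵀ, vecMul_transpose]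

theorem _root_.HasFDerivAt.eventually_dotProduct_mulVec_add_le {f : (n → ℝ) → n → ℝ}
    {A P W S : Matrix n n ℝ} (hf : HasFDerivAt f (mulVecLin A).toContinuousLinearMap 0)
    (hf0 : f 0 = 0) (hLyap : Aᵀ * P * A - P = -W) (hWS : (W - S).PosDef) :
    ∀ᶠ x in 𝓝 0, f x ⬝ᵥ (P *ᵥ f x) + x ⬝ᵥ (S *ᵥ x) ≤ x ⬝ᵥ (P *ᵥ x) := by
  have hlin : (fun x => f x - A *ᵥ x) =o[𝓝 0] fun x => ‖x‖ := by
    simpa [hf0] using hf.isLittleO.norm_right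
  have hA : (fun x => A *ᵥ x) =O[𝓝 0] fun x => ‖x‖ :=
    ((mulVecLin A).toContinuousLinearMap.isBigO_id _).norm_right
  have hfO : f =O[𝓝 0] fun x => ‖x‖ := (hlin.isBigO.add hA).congr_left fun x => by simp
  classical
  have hquad := (toLinearMap₂' ℝ P).toContinuousBilinearMap.isLittleO_comp₂_self_sub hlin hfO hA
  simp only [LinearMap.toContinuousBilinearMap_apply, toLinearMap₂'_apply'] at hquad
  obtain ⟨μ, hμ, hlow⟩ := hWS.exists_pos_mul_sq_norm_le
  -- the margin `W - S` absorbs the `o(‖x‖²)` error of the linearisation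
  filter_upwards [hquad.bound hμ] with x hx
  have hAx : (A *ᵥ x) ⬝ᵥ (P *ᵥ (A *ᵥ x)) = x ⬝ᵥ (P *ᵥ x) - x ⬝ᵥ (W *ᵥ x) := by
    rw [← dotProduct_mulVec_transpose_mul_mul, sub_eq_iff_eq_add.mp hLyap, add_mulVec,
      neg_mulVec, dotProduct_add, dotProduct_neg]
    ring
  have hWSx := hlow x
  rw [sub_mulVec, dotProduct_sub] at hWSx
  rw [Real.norm_eq_abs, norm_pow, norm_norm] at hx
  linarith [(abs_le.mp hx).2]

end Matrix

theorem HasFDerivAt.comp_prodMk_neg_mulVec {m n : Type*} [Fintype m] [Fintype n]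
    {F : (n → ℝ) × (m → ℝ) → n → ℝ} {D : (n → ℝ) × (m → ℝ) →L[ℝ] n → ℝ} {Φ : Matrix n n ℝ}
    {Γ : Matrix n m ℝ} (hF : HasFDerivAt F D (0, 0)) (hD : ∀ p, D p = Φ *ᵥ p.1 + Γ *ᵥ p.2)
    (L : Matrix m n ℝ) :
    HasFDerivAt (fun x => F (x, -(L *ᵥ x))) (mulVecLin (Φ - Γ * L)).toContinuousLinearMap 0 := by
  have hfeedback := (hasFDerivAt_id (0 : n → ℝ)).prodMk
    (mulVecLin L).toContinuousLinearMap.hasFDerivAt.neg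
  have hF' : HasFDerivAt F D (id 0, -(mulVecLin L).toContinuousLinearMap 0) := by simpa using hF
  refine (hF'.comp 0 hfeedback).congr_fderiv ?_
  ext x : 1
  simp [hD, sub_eq_add_neg, mulVec_neg]

theorem summable_and_tsum_le_of_add_le {v s : ℕ → ℝ} (hv : ∀ k, 0 ≤ v k) (hs : ∀ k, 0 ≤ s k)
    (hdec : ∀ k, v (k + 1) + s k ≤ v k) : Summable s ∧ ∑' k, s k ≤ v 0 := by
  have htelescope : ∀ N, ∑ k ∈ Finset.range N, s k + v N ≤ v 0 := by
    intro N
    induction N with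
    | zero => simp
    | succ N ih => rw [Finset.sum_range_succ]; linarith [hdec N]
  have hpartial : ∀ N, ∑ k ∈ Finset.range N, s k ≤ v 0 := fun N => by
    linarith [htelescope N, hv N]
  exact ⟨summable_of_sum_range_le hs hpartial, Real.tsum_le_of_sum_range_le hs hpartial⟩

theorem summable_and_tsum_le_of_mem_sublevel {E : Type*} {f : E → E} {V s : E → ℝ} {α : ℝ}
    (hV : ∀ x, 0 ≤ V x) (hs : ∀ x, 0 ≤ s x) (hdec : ∀ x, V x ≤ α → V (f x) + s x ≤ V x)
    {x : ℕ → E} (hx : ∀ k, x (k + 1) = f (x k)) (hx0 : V (x 0) ≤ α) :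
    Summable (fun k => s (x k)) ∧ ∑' k, s (x k) ≤ V (x 0) := by
  have hmem : ∀ k, V (x k) ≤ α := by
    intro k
    induction k with
    | zero => exact hx0
    | succ k ih => rw [hx]; linarith [hdec _ ih, hs (x k)]
  exact summable_and_tsum_le_of_add_le (fun k => hV _) (fun k => hs _)
    fun k => hx k ▸ hdec _ (hmem k)

theorem lemma2_lqr_based_general (nx nu : ℕ)
    (F : (Fin nx → ℝ) × (Fin nu → ℝ) → (Fin nx → ℝ))
    (hF : ContDiff ℝ 2 F) (hF0 : F (0, 0) = 0)
    (U : Set (Fin nu → ℝ)) (hU : (0 : Fin nu → ℝ) ∈ interior U)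
    (Wx tWx : Matrix (Fin nx) (Fin nx) ℝ)
    (Wu tWu : Matrix (Fin nu) (Fin nu) ℝ)
    (hWx : Wx.PosDef) (hWu : Wu.PosDef)
    (hdx : (tWx - Wx).PosDef) (hdu : (tWu - Wu).PosDef)
    (Φ : Matrix (Fin nx) (Fin nx) ℝ) (Γ : Matrix (Fin nx) (Fin nu) ℝ)
    (hΦΓ : ∀ p : (Fin nx → ℝ) × (Fin nu → ℝ),
      fderiv ℝ F (0, 0) p = Φ *ᵥ p.1 + Γ *ᵥ p.2)
    (P : Matrix (Fin nx) (Fin nx) ℝ) (hP : P.PosDef)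
    (L : Matrix (Fin nu) (Fin nx) ℝ)
    (hLyap : (Φ - Γ * L)ᵀ * P * (Φ - Γ * L) - P = -(tWx + Lᵀ * tWu * L)) :
    ∃ α > (0 : ℝ),
      (∀ x : Fin nx → ℝ, x ⬝ᵥ (P *ᵥ x) ≤ α → -(L *ᵥ x) ∈ U) ∧
      (∀ x : Fin nx → ℝ, x ⬝ᵥ (P *ᵥ x) ≤ α →
        (F (x, -(L *ᵥ x))) ⬝ᵥ (P *ᵥ F (x, -(L *ᵥ x))) ≤ α) ∧
      ∀ x : ℕ → Fin nx → ℝ, (∀ k, x (k + 1) = F (x k, -(L *ᵥ x k))) →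
        (x 0) ⬝ᵥ (P *ᵥ x 0) ≤ α →
        Summable (fun k => (x k) ⬝ᵥ (Wx *ᵥ x k) + (L *ᵥ x k) ⬝ᵥ (Wu *ᵥ (L *ᵥ x k))) ∧
        ∑' k, ((x k) ⬝ᵥ (Wx *ᵥ x k) + (L *ᵥ x k) ⬝ᵥ (Wu *ᵥ (L *ᵥ x k)))
          ≤ (x 0) ⬝ᵥ (P *ᵥ x 0) := by
  have hloop := ((hF.differentiable (by norm_num) (0, 0)).hasFDerivAt).comp_prodMk_neg_mulVec hΦΓ L
  have hmargin : (tWx + Lᵀ * tWu * L - (Wx + Lᵀ * Wu * L)).PosDef := by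
    have hsplit : tWx + Lᵀ * tWu * L - (Wx + Lᵀ * Wu * L) = tWx - Wx + Lᵀ * (tWu - Wu) * L := by
      rw [Matrix.mul_sub, Matrix.sub_mul]; abel
    rw [hsplit]
    exact hdx.add_posSemidef (hdu.posSemidef.conjTranspose_mul_mul_same L)
  have hdec := hloop.eventually_dotProduct_mulVec_add_le (by simpa using hF0) hLyap hmargin
  have hadm : ∀ᶠ x in 𝓝 (0 : Fin nx → ℝ), -(L *ᵥ x) ∈ U := by
    have hcont : Continuous fun x : Fin nx → ℝ => -(L *ᵥ x) := by fun_prop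
    exact hcont.tendsto' 0 0 (by simp) |>.eventually (mem_interior_iff_mem_nhds.mp hU)
  obtain ⟨α, hα, hsub⟩ := hP.exists_setOf_dotProduct_mulVec_le_subset (hdec.and hadm)
  have hV : ∀ x : Fin nx → ℝ, 0 ≤ x ⬝ᵥ (P *ᵥ x) := fun x => by
    simpa using hP.posSemidef.dotProduct_mulVec_nonneg x
  have hstage : ∀ x : Fin nx → ℝ, 0 ≤ x ⬝ᵥ (Wx *ᵥ x) + (L *ᵥ x) ⬝ᵥ (Wu *ᵥ (L *ᵥ x)) := fun x =>
    add_nonneg (by simpa using hWx.posSemidef.dotProduct_mulVec_nonneg x)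
      (by simpa using hWu.posSemidef.dotProduct_mulVec_nonneg (L *ᵥ x))
  have hlyap : ∀ x : Fin nx → ℝ, x ⬝ᵥ (P *ᵥ x) ≤ α → F (x, -(L *ᵥ x)) ⬝ᵥ (P *ᵥ F (x, -(L *ᵥ x)))
      + (x ⬝ᵥ (Wx *ᵥ x) + (L *ᵥ x) ⬝ᵥ (Wu *ᵥ (L *ᵥ x))) ≤ x ⬝ᵥ (P *ᵥ x) := fun x hx => by
    simpa [add_mulVec, dotProduct_mulVec_transpose_mul_mul] using (hsub hx).1
  refine ⟨α, hα, fun x hx => (hsub hx).2, fun x hx => by linarith [hlyap x hx, hstage x],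
    fun x hx hx0 => summable_and_tsum_le_of_mem_sublevel hV hstage hlyap hx hx0⟩

/-- Lemma 2 (LQR based approach): if `P` and `L` solve the Riccati-type pair
`ΦLᵀ P ΦL - P = -(W̃x + Lᵀ W̃u L)` and `L = (W̃u + Γᵀ P Γ)⁻¹ Γᵀ P Φ` with enlarged weighting
matrices `W̃x > Wx`, `W̃u > Wu`, then there exists `α > 0` such that on
`Ω = {x | xᵀ P x ≤ α}`: the feedback `-Lx` is admissible, `Ω` is invariant for the closed
loop `x(k+1) = F(x(k), -L x(k))`, and the infinite-horizon closed-loop stage cost is bounded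
by `x(0)ᵀ P x(0)`. -/
theorem lemma2_lqr_based (nx nu : ℕ)
    (F : (Fin nx → ℝ) × (Fin nu → ℝ) → (Fin nx → ℝ))
    (hF : ContDiff ℝ 2 F) (hF0 : F (0, 0) = 0)
    (U : Set (Fin nu → ℝ)) (hU : (0 : Fin nu → ℝ) ∈ interior U)
    (Wx tWx : Matrix (Fin nx) (Fin nx) ℝ) (hWxs : Wx.IsSymm) (htWxs : tWx.IsSymm)
    (Wu tWu : Matrix (Fin nu) (Fin nu) ℝ) (hWus : Wu.IsSymm) (htWus : tWu.IsSymm)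
    (hWx : Wx.PosDef) (hWu : Wu.PosDef)
    (hdx : (tWx - Wx).PosDef) (hdu : (tWu - Wu).PosDef)
    (Φ : Matrix (Fin nx) (Fin nx) ℝ) (Γ : Matrix (Fin nx) (Fin nu) ℝ)
    (hΦΓ : ∀ p : (Fin nx → ℝ) × (Fin nu → ℝ),
      fderiv ℝ F (0, 0) p = Φ *ᵥ p.1 + Γ *ᵥ p.2)
    (P : Matrix (Fin nx) (Fin nx) ℝ) (hP : P.PosDef)
    (L : Matrix (Fin nu) (Fin nx) ℝ)
    (hLyap : (Φ - Γ * L)ᵀ * P * (Φ - Γ * L) - P = -(tWx + Lᵀ * tWu * L))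
    (hInv : IsUnit (tWu + Γᵀ * P * Γ))
    (hL : L = (tWu + Γᵀ * P * Γ)⁻¹ * (Γᵀ * P * Φ)) :
    ∃ α > (0 : ℝ),
      (∀ x : Fin nx → ℝ, x ⬝ᵥ (P *ᵥ x) ≤ α → -(L *ᵥ x) ∈ U) ∧
      (∀ x : Fin nx → ℝ, x ⬝ᵥ (P *ᵥ x) ≤ α →
        (F (x, -(L *ᵥ x))) ⬝ᵥ (P *ᵥ F (x, -(L *ᵥ x))) ≤ α) ∧
      ∀ x : ℕ → Fin nx → ℝ, (∀ k, x (k + 1) = F (x k, -(L *ᵥ x k))) →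
        (x 0) ⬝ᵥ (P *ᵥ x 0) ≤ α →
        Summable (fun k => (x k) ⬝ᵥ (Wx *ᵥ x k) + (L *ᵥ x k) ⬝ᵥ (Wu *ᵥ (L *ᵥ x k))) ∧
        ∑' k, ((x k) ⬝ᵥ (Wx *ᵥ x k) + (L *ᵥ x k) ⬝ᵥ (Wu *ᵥ (L *ᵥ x k)))
          ≤ (x 0) ⬝ᵥ (P *ᵥ x 0) :=
  lemma2_lqr_based_general nx nu F hF hF0 U hU Wx tWx Wu tWu hWx hWu hdx hdu Φ Γ hΦΓ P hP L hLyap
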